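/- arXiv:1911.01634 — 2 statements merged into one kernel-verified Lean document; each statement's English description precedes it below -/
import Mathlib

section
/- (Blow-up rate upper bound independent of M.) Let q > 1, Λ > 0, T > 0, and for each M > 0 let Γ^M solve -dΓ^M/dt = Λ - |Γ^M|^{q*}/((q*-1)Λ^{q*-1}) on [0,T) with Γ^M(T) = M, where q* = q/(q-1). Suppose ε ∈ (0,T) and M₀ are such that Γ^M(t) > ΛT for all M > M₀ and t ∈ [T-ε, T]. Then there exists a constant C₀ depending only on Λ and T (not on M) such that Γ^M(t) ≤ C₀/(T-t)^{q-1} for all t ∈ [0,T) and all M > M₀. -/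
/-!
For `C` large, `W(t) = C / (T - t)^(q-1)` is a strict subsolution of the forward equation
`Γ' = |Γ|^{q*} / ((q*-1) Λ^{q*-1}) - Λ` on `[0, T)`: because `(q-1) q* = q`, both `W'` and `|W|^{q*}`
are multiples of `(T - t)^{-q}`, and the second coefficient grows superlinearly in `C`. A solution
that exceeds `W` at some time stays above it, hence blows up at `T`, which is impossible for a
solution continuous on `[0, T]`. The constant `C` depends on `q`, `Λ`, `T` only, not on `M`.
-/

open Real Set Filter Topology

theorem le_of_deriv_lt_of_tendsto_atTop {g u W W' : ℝ → ℝ} {a T : ℝ}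
    (hu : ContinuousOn u (Icc a T)) (hu' : ∀ t ∈ Ico a T, HasDerivAt u (g (u t)) t)
    (hW : ∀ t ∈ Ico a T, HasDerivAt W (W' t) t) (hW' : ∀ t ∈ Ico a T, W' t < g (W t))
    (hWT : Tendsto W (𝓝[<] T) atTop) : ∀ t ∈ Ico a T, u t ≤ W t := by
  intro t ht
  by_contra! hlt
  have hstay : ∀ s ∈ Ico t T, W s ≤ u s := by
    intro s hs
    have hsub : Icc t s ⊆ Ico a T := Icc_subset_Ico ht.1 hs.2
    have hsub' : Ico t s ⊆ Ico a T := Ico_subset_Icc_self.trans hsub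
    exact image_le_of_deriv_right_lt_deriv_boundary'
      (fun x hx => (hW x (hsub hx)).continuousAt.continuousWithinAt)
      (fun x hx => (hW x (hsub' hx)).hasDerivWithinAt) hlt.le
      (hu.mono (hsub.trans Ico_subset_Icc_self))
      (fun x hx => (hu' x (hsub' hx)).hasDerivWithinAt)
      (fun x hx hWu => hWu ▸ hW' x (hsub' hx)) ⟨hs.1, le_rfl⟩
  have hu_lim : Tendsto u (𝓝[<] T) (𝓝 (u T)) :=
    ((hu T ⟨ht.1.trans ht.2.le, le_rfl⟩).mono_of_mem_nhdsWithin
      (mem_of_superset (Ioo_mem_nhdsLT (ht.1.trans_lt ht.2)) Ioo_subset_Icc_self)).tendsto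
  obtain ⟨s, hWs, hus, hs⟩ := ((hWT.eventually_gt_atTop (u T + 1)).and
    ((hu_lim.eventually (gt_mem_nhds (lt_add_one (u T)))).and (Ico_mem_nhdsLT ht.2))).exists
  linarith [hstay s hs]

theorem hasDerivAt_div_sub_rpow (C T q : ℝ) {t : ℝ} (ht : t < T) :
    HasDerivAt (fun t => C / (T - t) ^ (q - 1)) ((q - 1) * C / (T - t) ^ q) t := by
  have hs : 0 < T - t := sub_pos.2 ht
  have h := ((((hasDerivAt_id t).const_sub T).rpow_const (p := q - 1) (Or.inl hs.ne')).inv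
    (rpow_pos_of_pos hs _).ne').const_mul C
  refine h.congr_deriv ?_
  have hq : (T - t) ^ q = (T - t) ^ (q - 1) * (T - t) := by rw [← rpow_add_one hs.ne']; ring_nf
  simp only [id]
  rw [rpow_sub_one hs.ne' (q - 1), hq]
  field_simp

theorem tendsto_div_sub_rpow_nhdsLT {C T p : ℝ} (hC : 0 < C) (hp : 0 < p) :
    Tendsto (fun t => C / (T - t) ^ p) (𝓝[<] T) atTop := by
  have hsub : Tendsto (fun t => T - t) (𝓝[<] T) (𝓝[>] 0) := by
    refine tendsto_nhdsWithin_of_tendsto_nhds_of_eventually_within _ ?_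
      (eventually_nhdsWithin_of_forall fun t (ht : t < T) => sub_pos.2 ht)
    simpa using ((continuous_sub_left T).tendsto T).mono_left nhdsWithin_le_nhds
  refine (((tendsto_rpow_neg_nhdsGT_zero (neg_neg_of_pos hp)).const_mul_atTop hC).comp
    hsub).congr' (eventually_nhdsWithin_of_forall fun t ht => ?_)
  simp [rpow_neg (sub_pos.2 ht).le, div_eq_mul_inv]

theorem exists_pos_mul_add_lt_rpow {r : ℝ} (hr : 1 < r) (a b : ℝ) :
    ∃ C > 0, a * C + b < C ^ r := by
  set c := (|a| + |b|) ^ (r - 1)⁻¹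
  have hc : 0 ≤ c := by positivity
  refine ⟨1 + c, by positivity, ?_⟩
  have hcr : |a| + |b| < (1 + c) ^ (r - 1) := by
    calc |a| + |b| = c ^ (r - 1) := by
          rw [← rpow_mul (by positivity), inv_mul_cancel₀ (by linarith), rpow_one]
      _ < (1 + c) ^ (r - 1) := rpow_lt_rpow hc (by linarith) (by linarith)
  calc a * (1 + c) + b ≤ (|a| + |b|) * (1 + c) := by
        nlinarith [le_abs_self a, le_abs_self b, abs_nonneg b]
    _ < (1 + c) ^ (r - 1) * (1 + c) := by gcongr
    _ = (1 + c) ^ r := by rw [← rpow_add_one (by positivity)]; ring_nf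

noncomputable def riccatiRhs (qs Λ x : ℝ) : ℝ := |x| ^ qs / ((qs - 1) * Λ ^ (qs - 1)) - Λ

theorem deriv_barrier_lt_riccatiRhs {q Λ T C t : ℝ} (hq : 1 < q) (hΛ : 0 < Λ) (hC : 0 < C)
    (hCbig : Λ ^ (q - 1)⁻¹ * C + Λ ^ (q - 1)⁻¹ * (Λ * T ^ q / (q - 1)) < C ^ (q / (q - 1)))
    (ht : 0 ≤ t) (htT : t < T) :
    (q - 1) * C / (T - t) ^ q < riccatiRhs (q / (q - 1)) Λ (C / (T - t) ^ (q - 1)) := by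
  have hp : 0 < q - 1 := sub_pos.2 hq
  have hs : 0 < T - t := sub_pos.2 htT
  set K := Λ ^ (q - 1)⁻¹ with hK
  have hconj : q / (q - 1) - 1 = (q - 1)⁻¹ := by field_simp; ring
  have hval : riccatiRhs (q / (q - 1)) Λ (C / (T - t) ^ (q - 1))
      = (q - 1) * C ^ (q / (q - 1)) / (K * (T - t) ^ q) - Λ := by
    rw [riccatiRhs, abs_of_pos (by positivity), div_rpow hC.le (by positivity), ← rpow_mul hs.le,
      hconj, mul_div_cancel₀ q hp.ne', ← hK]
    field_simp
  have hsT : Λ * (T - t) ^ q ≤ Λ * T ^ q := by gcongr; linarith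
  rw [hval, lt_sub_iff_add_lt, lt_div_iff₀ (by positivity)]
  calc ((q - 1) * C / (T - t) ^ q + Λ) * (K * (T - t) ^ q)
      = K * ((q - 1) * C + Λ * (T - t) ^ q) := by field_simp
    _ ≤ K * ((q - 1) * C + Λ * T ^ q) := by gcongr
    _ = (q - 1) * (K * C + K * (Λ * T ^ q / (q - 1))) := by field_simp
    _ < (q - 1) * C ^ (q / (q - 1)) := by gcongr

theorem stmt7_general (q qs Λ T M₀ : ℝ) (hq : 1 < q) (hqs : qs = q / (q-1))
    (hΛ : 0 < Λ)
    (Γ : ℝ → ℝ → ℝ)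
    (hcont : ∀ M, M₀ < M → ContinuousOn (Γ M) (Icc 0 T))
    (hode : ∀ M, M₀ < M → ∀ t ∈ Ico (0:ℝ) T,
      HasDerivAt (Γ M) (|Γ M t| ^ qs / ((qs-1) * Λ^(qs-1)) - Λ) t) :
    ∃ C₀ > 0, ∀ M, M₀ < M → ∀ t ∈ Ico (0:ℝ) T, Γ M t ≤ C₀ / (T-t)^(q-1) := by
  subst hqs
  have hp : 0 < q - 1 := sub_pos.2 hq
  obtain ⟨C, hC, hCbig⟩ := exists_pos_mul_add_lt_rpow ((one_lt_div hp).2 (sub_one_lt q))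
    (Λ ^ (q - 1)⁻¹) (Λ ^ (q - 1)⁻¹ * (Λ * T ^ q / (q - 1)))
  exact ⟨C, hC, fun M hM => le_of_deriv_lt_of_tendsto_atTop (g := riccatiRhs (q / (q - 1)) Λ)
    (hcont M hM) (hode M hM) (fun t ht => hasDerivAt_div_sub_rpow C T q ht.2)
    (fun t ht => deriv_barrier_lt_riccatiRhs hq hΛ hC hCbig ht.1 ht.2)
    (tendsto_div_sub_rpow_nhdsLT hC hp)⟩

/-- Blow-up rate upper bound, independent of the terminal value M, for the solutions
of -Γ' = Λ - |Γ|^{q*}/((q*-1)Λ^{q*-1}) with Γ(T) = M. -/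
theorem stmt7 (q qs Λ T ε M₀ : ℝ) (hq : 1 < q) (hqs : qs = q / (q-1))
    (hΛ : 0 < Λ) (hT : 0 < T) (hε : 0 < ε) (hεT : ε < T)
    (Γ : ℝ → ℝ → ℝ)
    (hcont : ∀ M, M₀ < M → ContinuousOn (Γ M) (Icc 0 T))
    (hode : ∀ M, M₀ < M → ∀ t ∈ Ico (0:ℝ) T,
      HasDerivAt (Γ M) (|Γ M t| ^ qs / ((qs-1) * Λ^(qs-1)) - Λ) t)
    (hterm : ∀ M, M₀ < M → Γ M T = M)
    (hbig : ∀ M, M₀ < M → ∀ t ∈ Icc (T-ε) T, Λ * T < Γ M t) :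
    ∃ C₀ > 0, ∀ M, M₀ < M → ∀ t ∈ Ico (0:ℝ) T, Γ M t ≤ C₀ / (T-t)^(q-1) :=
  stmt7_general q qs Λ T M₀ hq hqs hΛ Γ hcont hode
end

section
/- (Lower bound via comparison with explicit solution.) Let q > 1, q* = q/(q-1), κ₀ > 0, μ ≥ 0, T > 0. For u^M(t) = ( (q*-1)κ₀^{q*-1}μ / ( (1 + (q*-1)κ₀^{q*-1}μ·M^{-(q*-1)}) e^{(q*-1)μ(T-t)} - 1 ) )^{q-1} (with the convention, for μ = 0, that u^M is the limit as μ→0⁺, i.e. u^M(t) = ( (T-t)/κ₀^{q*-1} + M^{-(q*-1)} )^{-(q-1)}), the pointwise limit u(t) = lim_{M→∞} u^M(t) satisfies u(t) ≥ c₀/(T-t)^{q-1} for all t ∈ [0,T), where c₀ > 0 depends only on q, κ₀, μ, T. -/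
open Real Set Filter

/-- Lower bound via comparison with the explicit solutions: the pointwise limit
u(t) = lim_{M→∞} u^M(t) satisfies u(t) ≥ c₀/(T-t)^{q-1} on [0,T). -/
theorem stmt16 (q qs κ₀ μ T : ℝ) (hq : 1 < q) (hqs : qs = q / (q-1))
    (hκ : 0 < κ₀) (hμ : 0 ≤ μ) (hT : 0 < T)
    (uM : ℝ → ℝ → ℝ)
    (huM : ∀ M t, uM M t =
      if μ = 0 then ((T-t) / κ₀^(qs-1) + 1 / M^(qs-1)) ^ (-(q-1))
      else ((qs-1) * κ₀^(qs-1) * μ /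
        ((1 + (qs-1) * κ₀^(qs-1) * μ / M^(qs-1)) * Real.exp ((qs-1)*μ*(T-t)) - 1)) ^ (q-1))
    (u : ℝ → ℝ)
    (hlim : ∀ t ∈ Ico (0:ℝ) T, Tendsto (fun M => uM M t) atTop (nhds (u t))) :
    ∃ c₀ > 0, ∀ t ∈ Ico (0:ℝ) T, c₀ / (T-t)^(q-1) ≤ u t := by
  have hq1 : (0:ℝ) < q - 1 := by linarith
  have hqs1 : qs - 1 = 1/(q-1) := by
    rw [hqs]; field_simp; ring
  have hqspos : 0 < qs - 1 := by rw [hqs1]; positivity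
  have hmul : (qs-1)*(q-1) = 1 := by
    rw [hqs1]; field_simp
  refine ⟨κ₀ * Real.exp (-(μ*T)) / 2^(q-1), by positivity, fun t ht => ?_⟩
  obtain ⟨ht0, htT⟩ := ht
  have hTt : 0 < T - t := by linarith
  set B := κ₀^(qs-1) * Real.exp (-((qs-1)*μ*T)) / (2*(T-t)) with hBdef
  have hBpos : 0 < B := by
    rw [hBdef]; positivity
  have hBq : B ^ (q-1) = κ₀ * Real.exp (-(μ*T)) / 2^(q-1) / (T-t)^(q-1) := by
    have h1 : (κ₀^(qs-1)) ^ (q-1) = κ₀ := by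
      rw [← Real.rpow_mul hκ.le, hmul, Real.rpow_one]
    have h2 : (Real.exp (-((qs-1)*μ*T))) ^ (q-1) = Real.exp (-(μ*T)) := by
      rw [← Real.exp_mul]; congr 1; linear_combination (-(μ*T)) * hmul
    rw [hBdef, Real.div_rpow (by positivity) (by positivity),
        Real.mul_rpow (by positivity) (Real.exp_pos _).le,
        Real.mul_rpow (by norm_num) hTt.le, h1, h2]
    ring
  rw [← hBq]
  refine ge_of_tendsto (hlim t ⟨ht0, htT⟩) ?_
  by_cases hμ0 : μ = 0
  · -- case μ = 0
    have htend : Tendsto (fun M : ℝ => 1/M^(qs-1)) atTop (nhds 0) := by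
      simp only [one_div]
      exact (tendsto_rpow_atTop hqspos).inv_tendsto_atTop
    filter_upwards [htend.eventually_le_const
        (show (0:ℝ) < (T-t)/κ₀^(qs-1) by positivity),
      eventually_ge_atTop (1:ℝ)] with M hM hM1
    rw [huM, if_pos hμ0]
    have hMp : (0:ℝ) < M := lt_of_lt_of_le one_pos hM1
    have hb1 : 0 < (T-t)/κ₀^(qs-1) := by positivity
    have hb2 : 0 < 1/M^(qs-1) := by positivity
    have hbpos : 0 < (T-t)/κ₀^(qs-1) + 1/M^(qs-1) := by linarith
    have hble : (T-t)/κ₀^(qs-1) + 1/M^(qs-1) ≤ 2*((T-t)/κ₀^(qs-1)) := by linarith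
    have hBinv : B ≤ ((T-t)/κ₀^(qs-1) + 1/M^(qs-1))⁻¹ := by
      have h1 : (2*((T-t)/κ₀^(qs-1)))⁻¹ ≤ ((T-t)/κ₀^(qs-1) + 1/M^(qs-1))⁻¹ :=
        inv_anti₀ hbpos hble
      have h2 : B = (2*((T-t)/κ₀^(qs-1)))⁻¹ := by
        rw [hBdef, hμ0]
        have hκp : κ₀^(qs-1) ≠ 0 := (Real.rpow_pos_of_pos hκ _).ne'
        field_simp
        simp
      rw [h2]; exact h1
    rw [Real.rpow_neg hbpos.le, ← Real.inv_rpow hbpos.le]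
    exact Real.rpow_le_rpow hBpos.le hBinv hq1.le
  · -- case μ > 0
    have hμpos : 0 < μ := lt_of_le_of_ne hμ (Ne.symm hμ0)
    have hδpos : 0 < (qs-1) * κ₀^(qs-1) * μ := by positivity
    have hxpos : 0 < (qs-1)*μ*(T-t) := by positivity
    have hex1 : 1 < Real.exp ((qs-1)*μ*(T-t)) := by
      have : Real.exp 0 < Real.exp ((qs-1)*μ*(T-t)) := Real.exp_lt_exp.mpr hxpos
      simpa using this
    have htend : Tendsto (fun M : ℝ => (qs-1) * κ₀^(qs-1) * μ / M^(qs-1)) atTop (nhds 0) := by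
      have h0 := (tendsto_rpow_atTop hqspos).inv_tendsto_atTop
      have := h0.const_mul ((qs-1) * κ₀^(qs-1) * μ)
      simpa [div_eq_mul_inv] using this
    filter_upwards [htend.eventually_le_const
        (show (0:ℝ) < (Real.exp ((qs-1)*μ*(T-t)) - 1)/Real.exp ((qs-1)*μ*(T-t)) from
          div_pos (by linarith) (Real.exp_pos _)),
      eventually_ge_atTop (1:ℝ)] with M hM hM1
    rw [huM, if_neg hμ0]
    set δ := (qs-1) * κ₀^(qs-1) * μ with hδdef
    set x := (qs-1)*μ*(T-t) with hxdef
    set s := δ / M^(qs-1) with hsdef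
    have hMp : (0:ℝ) < M := lt_of_lt_of_le one_pos hM1
    have hs : 0 ≤ s := div_nonneg hδpos.le (Real.rpow_pos_of_pos hMp _).le
    set D := (1 + s) * Real.exp x - 1 with hDdef
    have hDge : Real.exp x - 1 ≤ D := by
      have := mul_nonneg hs (Real.exp_pos x).le
      rw [hDdef]; nlinarith
    have hDpos : 0 < D := by linarith
    have hsx : s * Real.exp x ≤ Real.exp x - 1 := by
      have h' : s * Real.exp x ≤ ((Real.exp x - 1)/Real.exp x) * Real.exp x :=
        mul_le_mul_of_nonneg_right hM (Real.exp_pos x).le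
      rwa [div_mul_cancel₀ _ (Real.exp_pos x).ne'] at h'
    have hDle : D ≤ 2*(Real.exp x - 1) := by
      have : D = Real.exp x + s * Real.exp x - 1 := by rw [hDdef]; ring
      linarith
    have hexp_bound : Real.exp x - 1 ≤ x * Real.exp x := by
      have h := Real.add_one_le_exp (-x)
      have h2 : Real.exp (-x) * Real.exp x = 1 := by
        rw [← Real.exp_add]; simp
      nlinarith [Real.exp_pos x]
    have hD2 : D ≤ 2*x*Real.exp x := by linarith
    have hstep2 : δ/(2*x*Real.exp x) ≤ δ/D := by
      apply div_le_div_of_nonneg_left hδpos.le hDpos hD2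
    have hstep1 : B ≤ δ/(2*x*Real.exp x) := by
      have heq : δ/(2*x*Real.exp x) = κ₀^(qs-1) * Real.exp (-x) / (2*(T-t)) := by
        rw [hδdef, hxdef, Real.exp_neg]
        have h1 : (qs-1) ≠ 0 := hqspos.ne'
        have h2 : μ ≠ 0 := hμ0
        have h3 : T - t ≠ 0 := hTt.ne'
        have h4 : Real.exp ((qs-1)*μ*(T-t)) ≠ 0 := (Real.exp_pos _).ne'
        field_simp
      rw [heq, hBdef]
      have hxle : x ≤ (qs-1)*μ*T := by
        rw [hxdef]
        exact mul_le_mul_of_nonneg_left (by linarith) (mul_nonneg hqspos.le hμ)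
      have hee : Real.exp (-((qs-1)*μ*T)) ≤ Real.exp (-x) :=
        Real.exp_le_exp.mpr (by linarith)
      have hnum : κ₀^(qs-1) * Real.exp (-((qs-1)*μ*T)) ≤ κ₀^(qs-1) * Real.exp (-x) :=
        mul_le_mul_of_nonneg_left hee (Real.rpow_pos_of_pos hκ _).le
      exact div_le_div_of_nonneg_right hnum (by linarith)
    calc B ^ (q-1) ≤ (δ/D) ^ (q-1) :=
          Real.rpow_le_rpow hBpos.le (le_trans hstep1 hstep2) hq1.le
      _ = _ := rfl
end
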